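/- H¹(X) = H¹_z(X) as sets of functions, and the two norms are equivalent, with equivalence constants depending only on the doubling constant C_D. -/

import Mathlib

open MeasureTheory Metric Filter Set

noncomputable section

/-- The parabolic quasi-distance on `ℝ × E`. -/
def pdist {E : Type*} [MetricSpace E] (p q : ℝ × E) : ℝ :=
  max (Real.sqrt |p.1 - q.1|) (dist p.2 q.2)

/-- The open parabolic ball in `N = ℝ × E`. -/
def pball {E : Type*} [MetricSpace E] (c : ℝ × E) (r : ℝ) : Set (ℝ × E) :=
  {p | pdist p c < r}

/-- The upper half space `X = (0,∞) × E` of `N = ℝ × E`. -/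
def Xset (E : Type*) : Set (ℝ × E) := {p | 0 < p.1}

/-- The product measure `ν = Lebesgue ⊗ μ` on `N = ℝ × E`. -/
def pmeas {E : Type*} [MeasurableSpace E] (μ : Measure E) : Measure (ℝ × E) :=
  (volume : Measure ℝ).prod μ

/-- A `(1,2)`-atom on `N`: supported in a parabolic ball `Q`, mean value zero, and
`‖a‖_{L²(ν)} ≤ ν(Q)^{-1/2}`. -/
def IsAtom12 {E : Type*} [MetricSpace E] [MeasurableSpace E]
    (μ : Measure E) (a : ℝ × E → ℝ) : Prop :=
  ∃ (c : ℝ × E) (r : ℝ), 0 < r ∧ Function.support a ⊆ pball c r ∧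
    Integrable a (pmeas μ) ∧ (∫ p, a p ∂(pmeas μ)) = 0 ∧
    eLpNorm a 2 (pmeas μ) ≤ (pmeas μ (pball c r)) ^ (-(1:ℝ)/2)

/-- `f = Σ λ_i a_i` with convergence in `L¹(ρ)`. -/
def HasL1Decomp {E : Type*} [MeasurableSpace E] (ρ : Measure (ℝ × E))
    (f : ℝ × E → ℝ) (lam : ℕ → ℝ) (a : ℕ → ℝ × E → ℝ) : Prop :=
  Summable (fun i => |lam i|) ∧
  Tendsto (fun k => eLpNorm (fun p => f p - ∑ i ∈ Finset.range k, lam i * a i p) 1 ρ)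
    atTop (nhds 0)

/-- Membership in the atomic Hardy space `H¹(N)`. -/
def MemH1 {E : Type*} [MetricSpace E] [MeasurableSpace E]
    (μ : Measure E) (f : ℝ × E → ℝ) : Prop :=
  Integrable f (pmeas μ) ∧
  ∃ (lam : ℕ → ℝ) (a : ℕ → ℝ × E → ℝ), (∀ i, IsAtom12 μ (a i)) ∧
    HasL1Decomp (pmeas μ) f lam a

/-- The `H¹(N)` norm: infimum of `Σ |λ_i|` over all atomic decompositions. -/
def H1norm {E : Type*} [MetricSpace E] [MeasurableSpace E]
    (μ : Measure E) (f : ℝ × E → ℝ) : ℝ :=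
  sInf {c | ∃ (lam : ℕ → ℝ) (a : ℕ → ℝ × E → ℝ), (∀ i, IsAtom12 μ (a i)) ∧
    HasL1Decomp (pmeas μ) f lam a ∧ c = ∑' i, |lam i|}

/-- Membership in `H¹_r(X)`: `f ∈ L¹(X,ν)` is the restriction to `X` of some `F ∈ H¹(N)`. -/
def MemH1r {E : Type*} [MetricSpace E] [MeasurableSpace E]
    (μ : Measure E) (f : ℝ × E → ℝ) : Prop :=
  IntegrableOn f (Xset E) (pmeas μ) ∧
  ∃ F : ℝ × E → ℝ, MemH1 μ F ∧ F =ᵐ[(pmeas μ).restrict (Xset E)] f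

/-- The quotient norm on `H¹_r(X)`. -/
def H1rnorm {E : Type*} [MetricSpace E] [MeasurableSpace E]
    (μ : Measure E) (f : ℝ × E → ℝ) : ℝ :=
  sInf {c | ∃ F : ℝ × E → ℝ, MemH1 μ F ∧ F =ᵐ[(pmeas μ).restrict (Xset E)] f ∧
    c = H1norm μ F}

/-- Membership in `H¹_z(X)`: the extension of `f` by zero belongs to `H¹(N)`. -/
def MemH1z {E : Type*} [MetricSpace E] [MeasurableSpace E]
    (μ : Measure E) (f : ℝ × E → ℝ) : Prop :=
  IntegrableOn f (Xset E) (pmeas μ) ∧ MemH1 μ ((Xset E).indicator f)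

/-- The `H¹_z(X)` norm: the `H¹(N)` norm of the zero extension. -/
def H1znorm {E : Type*} [MetricSpace E] [MeasurableSpace E]
    (μ : Measure E) (f : ℝ × E → ℝ) : ℝ :=
  H1norm μ ((Xset E).indicator f)

/-- `μ` is doubling with constant `C_D`, with all balls of positive finite measure. -/
def DoublingWith {E : Type*} [MetricSpace E] [MeasurableSpace E]
    (μ : Measure E) (C_D : ℝ) : Prop :=
  (∀ (x : E) (r : ℝ), 0 < r → 0 < μ (ball x r) ∧ μ (ball x r) < ⊤) ∧
  (∀ (x : E) (r : ℝ), 0 < r → μ (ball x (2 * r)) ≤ ENNReal.ofReal C_D * μ (ball x r))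

/-- A Coifman–Weiss atom for the space of homogeneous type `(X, d̃, ν)`: supported in
`Q ∩ X` for a parabolic ball `Q` centered at a point of `X`, with `∫_X a dν = 0` and
`‖a‖_{L²(ν)} ≤ ν(Q ∩ X)^{−1/2}`. -/
def IsCWAtom {E : Type*} [MetricSpace E] [MeasurableSpace E]
    (μ : Measure E) (a : ℝ × E → ℝ) : Prop :=
  ∃ (c : ℝ × E) (r : ℝ), 0 < r ∧ c ∈ Xset E ∧
    Function.support a ⊆ pball c r ∩ Xset E ∧
    Integrable a (pmeas μ) ∧ (∫ p in Xset E, a p ∂(pmeas μ)) = 0 ∧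
    eLpNorm a 2 (pmeas μ) ≤ (pmeas μ (pball c r ∩ Xset E)) ^ (-(1:ℝ)/2)

/-- Membership in the Coifman–Weiss Hardy space `H¹(X)` of `(X, d̃, ν)`. -/
def MemH1CW {E : Type*} [MetricSpace E] [MeasurableSpace E]
    (μ : Measure E) (f : ℝ × E → ℝ) : Prop :=
  IntegrableOn f (Xset E) (pmeas μ) ∧
  ∃ (lam : ℕ → ℝ) (a : ℕ → ℝ × E → ℝ), (∀ i, IsCWAtom μ (a i)) ∧
    Summable (fun i => |lam i|) ∧
    Tendsto (fun k => eLpNorm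
        (fun p => f p - ∑ i ∈ Finset.range k, lam i * a i p) 1
        ((pmeas μ).restrict (Xset E)))
      atTop (nhds 0)

/-- The Coifman–Weiss `H¹(X)` norm. -/
def H1CWnorm {E : Type*} [MetricSpace E] [MeasurableSpace E]
    (μ : Measure E) (f : ℝ × E → ℝ) : ℝ :=
  sInf {s | ∃ (lam : ℕ → ℝ) (a : ℕ → ℝ × E → ℝ), (∀ i, IsCWAtom μ (a i)) ∧
    Summable (fun i => |lam i|) ∧
    Tendsto (fun k => eLpNorm
        (fun p => f p - ∑ i ∈ Finset.range k, lam i * a i p) 1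
        ((pmeas μ).restrict (Xset E)))
      atTop (nhds 0) ∧ s = ∑' i, |lam i|}


/-!
A Coifman–Weiss atom on `X` is supported in `Q ∩ X` for a ball `Q` centred in `X`, so
`ν(Q) ≤ 2 ν(Q ∩ X)` and half of it is a `(1,2)`-atom on `N`. Conversely, a `(1,2)`-atom `a` on `N`
supported in `Q = B((c₁, x), r)` folds to `1_X (a + a ∘ R)` with `R (t, x) = (-t, x)`: this has
mean zero on `X`, at most twice the `L²` norm of `a`, and is supported in `Q' ∩ X` where `Q'` has
the same radius and centre `(max |c₁| r², x) ∈ X`, so `ν(Q' ∩ X) ≤ ν(Q)`; half of it is a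
Coifman–Weiss atom. Folding the partial sums of a decomposition of `1_X f` at most doubles their
`L¹` error on `X`, so atomic decompositions pass in both directions with `Σ |λᵢ|` doubled.
-/

open scoped ENNReal

theorem ENNReal.rpow_neg_half_le_mul {x y K : ℝ≥0∞} (hK₀ : K ≠ 0) (hK : K ≠ ∞)
    (h : x ≤ K ^ 2 * y) : y ^ (-(1:ℝ)/2) ≤ K * x ^ (-(1:ℝ)/2) := by
  have hsqrt : x ^ (1/2 : ℝ) ≤ K * y ^ (1/2 : ℝ) := by
    calc x ^ (1/2 : ℝ) ≤ (K ^ 2 * y) ^ (1/2 : ℝ) := ENNReal.rpow_le_rpow h (by norm_num)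
      _ = K * y ^ (1/2 : ℝ) := by
        rw [ENNReal.mul_rpow_of_nonneg _ _ (by norm_num), ← ENNReal.rpow_natCast,
          ← ENNReal.rpow_mul]
        norm_num
  rw [neg_div, ENNReal.rpow_neg, ENNReal.rpow_neg]
  calc (y ^ (1/2 : ℝ))⁻¹ = K * (K * y ^ (1/2 : ℝ))⁻¹ := by
        rw [ENNReal.mul_inv (Or.inl hK₀) (Or.inl hK), ← mul_assoc,
          ENNReal.mul_inv_cancel hK₀ hK, one_mul]
    _ ≤ K * (x ^ (1/2 : ℝ))⁻¹ := by gcongr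

theorem eLpNorm_inv_two_smul_le {α : Type*} [MeasurableSpace α] {ν : Measure α} {g : α → ℝ}
    {m : ℝ≥0∞} (hg : eLpNorm g 2 ν ≤ 2 * m) : eLpNorm ((2⁻¹ : ℝ) • g) 2 ν ≤ m := by
  rw [eLpNorm_const_smul, Real.enorm_eq_ofReal (by norm_num), ENNReal.ofReal_inv_of_pos two_pos,
    ENNReal.ofReal_ofNat]
  calc 2⁻¹ * eLpNorm g 2 ν ≤ 2⁻¹ * (2 * m) := by gcongr
    _ = m := ENNReal.inv_mul_cancel_left two_ne_zero ENNReal.ofNat_ne_top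

theorem csInf_le_mul_csInf {S T : Set ℝ} {k : ℝ} (hk : 0 ≤ k) (hT : BddBelow T)
    (hS : S.Nonempty) (hST : ∀ s ∈ S, k * s ∈ T) : sInf T ≤ k * sInf S := by
  rw [← smul_eq_mul, ← Real.sInf_smul_of_nonneg hk]
  exact csInf_le_csInf hT (hS.smul_set) (by rintro _ ⟨s, hs, rfl⟩; exact hST s hs)

theorem Xset_eq_prod {E : Type*} : Xset E = Ioi 0 ×ˢ univ := by
  ext p; simp [Xset]

def reflectTime (E : Type*) [MeasurableSpace E] : (ℝ × E) ≃ᵐ (ℝ × E) :=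
  (MeasurableEquiv.neg ℝ).prodCongr (MeasurableEquiv.refl E)

section Reflection

variable {E : Type*} [MeasurableSpace E] {μ : Measure E}

theorem measurableSet_Xset : MeasurableSet (Xset E) :=
  measurableSet_lt measurable_const measurable_fst

@[simp]
theorem reflectTime_apply (p : ℝ × E) : reflectTime E p = (-p.1, p.2) := rfl

theorem measurePreserving_reflectTime [SFinite μ] :
    MeasurePreserving (reflectTime E) (pmeas μ) (pmeas μ) :=
  (Measure.measurePreserving_neg volume).prod (MeasurePreserving.id μ)

theorem reflectTime_preimage_compl_Xset_ae_eq [SFinite μ] :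
    (reflectTime E ⁻¹' (Xset E)ᶜ : Set (ℝ × E)) =ᵐ[pmeas μ] Xset E := by
  have hpre : reflectTime E ⁻¹' (Xset E)ᶜ = Ici 0 ×ˢ univ := by ext p; simp [Xset]
  rw [hpre, Xset_eq_prod]
  exact Measure.set_prod_ae_eq Ioi_ae_eq_Ici.symm EventuallyEq.rfl

def foldOntoXset (g : ℝ × E → ℝ) : ℝ × E → ℝ :=
  (Xset E).indicator fun p => g p + g (reflectTime E p)

theorem MeasureTheory.Integrable.comp_reflectTime [SFinite μ] {g : ℝ × E → ℝ}
    (hg : Integrable g (pmeas μ)) : Integrable (fun p => g (reflectTime E p)) (pmeas μ) :=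
  measurePreserving_reflectTime.integrable_comp_emb (reflectTime E).measurableEmbedding |>.2 hg

theorem MeasureTheory.Integrable.foldOntoXset [SFinite μ] {g : ℝ × E → ℝ}
    (hg : Integrable g (pmeas μ)) : Integrable (foldOntoXset g) (pmeas μ) :=
  (hg.add hg.comp_reflectTime).indicator measurableSet_Xset

theorem eLpNorm_foldOntoXset_le [SFinite μ] {g : ℝ × E → ℝ}
    (hg : AEStronglyMeasurable g (pmeas μ)) {q : ℝ≥0∞} (hq : 1 ≤ q) :
    eLpNorm (foldOntoXset g) q (pmeas μ) ≤ 2 * eLpNorm g q (pmeas μ) := by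
  have hgR : eLpNorm (g ∘ reflectTime E) q (pmeas μ) = eLpNorm g q (pmeas μ) :=
    eLpNorm_comp_measurePreserving hg measurePreserving_reflectTime
  calc eLpNorm (foldOntoXset g) q (pmeas μ)
      ≤ eLpNorm (g + g ∘ reflectTime E) q (pmeas μ) := eLpNorm_indicator_le _
    _ ≤ eLpNorm g q (pmeas μ) + eLpNorm (g ∘ reflectTime E) q (pmeas μ) :=
        eLpNorm_add_le hg (hg.comp_measurePreserving measurePreserving_reflectTime) hq
    _ = 2 * eLpNorm g q (pmeas μ) := by rw [hgR, two_mul]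

theorem setIntegral_foldOntoXset [SFinite μ] {g : ℝ × E → ℝ} (hg : Integrable g (pmeas μ)) :
    ∫ p in Xset E, foldOntoXset g p ∂(pmeas μ) = ∫ p, g p ∂(pmeas μ) := by
  have hreflect : ∫ p in Xset E, g (reflectTime E p) ∂(pmeas μ)
      = ∫ p in (Xset E)ᶜ, g p ∂(pmeas μ) := by
    rw [← measurePreserving_reflectTime.setIntegral_preimage_emb
      (reflectTime E).measurableEmbedding g (Xset E)ᶜ,
      setIntegral_congr_set reflectTime_preimage_compl_Xset_ae_eq]
  rw [foldOntoXset, setIntegral_congr_fun measurableSet_Xset fun p hp => indicator_of_mem hp _,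
    integral_add hg.integrableOn hg.comp_reflectTime.integrableOn, hreflect,
    integral_add_compl measurableSet_Xset hg]

theorem support_foldOntoXset_subset (g : ℝ × E → ℝ) :
    Function.support (foldOntoXset g)
      ⊆ Xset E ∩ (Function.support g ∪ reflectTime E ⁻¹' Function.support g) := by
  intro p hp
  rw [foldOntoXset, Set.support_indicator] at hp
  refine ⟨hp.1, ?_⟩
  by_contra h
  simp only [mem_union, mem_preimage, Function.mem_support, not_or, not_not] at h
  exact hp.2 (by simp only [h.1, h.2, add_zero])

end Reflection

section Decompositions

variable {E : Type*} [MeasurableSpace E] {μ : Measure E} {ρ : Measure (ℝ × E)}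
  {F : ℝ × E → ℝ} {lam : ℕ → ℝ} {a : ℕ → ℝ × E → ℝ}

theorem HasL1Decomp.rescale (h : HasL1Decomp ρ F lam a) {k : ℝ} (hk : k ≠ 0) :
    HasL1Decomp ρ F (fun i => k * lam i) (fun i => k⁻¹ • a i) := by
  have hterm : ∀ i p, k * lam i * (k⁻¹ • a i) p = lam i * a i p := fun i p => by
    simp only [Pi.smul_apply, smul_eq_mul]
    field_simp
  exact ⟨by simpa only [abs_mul] using h.1.mul_left |k|, by simpa only [hterm] using h.2⟩

theorem HasL1Decomp.indicator_of_restrict {s : Set (ℝ × E)} (hs : MeasurableSet s)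
    (h : HasL1Decomp (ρ.restrict s) F lam a) (ha : ∀ i, Function.support (a i) ⊆ s) :
    HasL1Decomp ρ (s.indicator F) lam a := by
  have hind : ∀ k, (fun p => s.indicator F p - ∑ i ∈ Finset.range k, lam i * a i p)
      = s.indicator fun p => F p - ∑ i ∈ Finset.range k, lam i * a i p := by
    intro k
    ext p
    by_cases hp : p ∈ s
    · simp [hp]
    · have hzero : ∀ i, a i p = 0 := fun i => Function.notMem_support.1 fun h => hp (ha i h)
      simp [hp, hzero]
  exact ⟨h.1, by simpa only [hind, eLpNorm_indicator_eq_eLpNorm_restrict hs] using h.2⟩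

/-- On `X` the reflected part of `1_X f` vanishes, so folding commutes with the partial sums. -/
theorem HasL1Decomp.restrict_foldOntoXset [SFinite μ] {f : ℝ × E → ℝ}
    (h : HasL1Decomp (pmeas μ) ((Xset E).indicator f) lam a)
    (hf : Integrable ((Xset E).indicator f) (pmeas μ)) (ha : ∀ i, Integrable (a i) (pmeas μ)) :
    HasL1Decomp ((pmeas μ).restrict (Xset E)) f lam fun i => foldOntoXset (a i) := by
  set g := fun k p => (Xset E).indicator f p - ∑ i ∈ Finset.range k, lam i * a i p
  have hfold : ∀ k, (Xset E).indicator
      (fun p => f p - ∑ i ∈ Finset.range k, lam i * foldOntoXset (a i) p)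
      = foldOntoXset (g k) := by
    intro k
    ext p
    by_cases hp : p ∈ Xset E
    · have hp' : reflectTime E p ∉ Xset E := fun h' => by
        simp only [Xset, mem_ofPred_eq, reflectTime_apply] at hp h'
        linarith
      simp only [foldOntoXset, g, indicator_of_mem hp, indicator_of_notMem hp', mul_add,
        Finset.sum_add_distrib]
      ring
    · simp [foldOntoXset, hp]
  have hle : ∀ k, eLpNorm (fun p => f p - ∑ i ∈ Finset.range k, lam i * foldOntoXset (a i) p) 1
      ((pmeas μ).restrict (Xset E)) ≤ 2 * eLpNorm (g k) 1 (pmeas μ) := fun k => by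
    rw [← eLpNorm_indicator_eq_eLpNorm_restrict measurableSet_Xset, hfold k]
    exact eLpNorm_foldOntoXset_le
      (hf.sub (integrable_finsetSum _ fun i _ => (ha i).const_mul _)).aestronglyMeasurable le_rfl
  have hlim : Tendsto (fun k => 2 * eLpNorm (g k) 1 (pmeas μ)) atTop (nhds 0) := by
    simpa using ENNReal.Tendsto.const_mul h.2 (Or.inr ENNReal.ofNat_ne_top)
  exact ⟨h.1, tendsto_of_tendsto_of_tendsto_of_le_of_le tendsto_const_nhds hlim
    (fun _ => zero_le) hle⟩

end Decompositions

section ParabolicBalls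

variable {E : Type*} [MetricSpace E]

theorem mem_pball_iff {c p : ℝ × E} {r : ℝ} (hr : 0 < r) :
    p ∈ pball c r ↔ |p.1 - c.1| < r ^ 2 ∧ dist p.2 c.2 < r := by
  simp [pball, pdist, Real.sqrt_lt' hr]

theorem pball_eq_prod (c : ℝ × E) {r : ℝ} (hr : 0 < r) :
    pball c r = Ioo (c.1 - r ^ 2) (c.1 + r ^ 2) ×ˢ ball c.2 r := by
  ext p
  simp only [mem_pball_iff hr, abs_sub_lt_iff, mem_prod, mem_Ioo, mem_ball]
  constructor <;> rintro ⟨⟨h₁, h₂⟩, h₃⟩ <;> exact ⟨⟨by linarith, by linarith⟩, h₃⟩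

theorem Xset_inter_pball_union_reflect_subset [MeasurableSpace E] (c : ℝ × E) {r : ℝ}
    (hr : 0 < r) :
    Xset E ∩ (pball c r ∪ reflectTime E ⁻¹' pball c r) ⊆ pball (max |c.1| (r ^ 2), c.2) r := by
  rintro p ⟨hp, hpQ⟩
  have hp₀ : 0 < p.1 := hp
  obtain ⟨ht, hx⟩ : |p.1 - (|c.1|)| < r ^ 2 ∧ dist p.2 c.2 < r := by
    rw [← abs_of_pos hp₀]
    rcases hpQ with h | h <;> obtain ⟨ht, hx⟩ := (mem_pball_iff hr).1 h
    · exact ⟨(abs_abs_sub_abs_le_abs_sub _ _).trans_lt ht, hx⟩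
    · refine ⟨?_, hx⟩
      simpa only [abs_neg] using (abs_abs_sub_abs_le_abs_sub (-p.1) c.1).trans_lt ht
  refine (mem_pball_iff hr).2 ⟨?_, hx⟩
  rw [abs_lt] at ht ⊢
  rcases max_cases |c.1| (r ^ 2) with ⟨hm, -⟩ | ⟨hm, hlt⟩ <;> rw [hm] <;> constructor <;> linarith

end ParabolicBalls

section Atoms

variable {E : Type*} [MetricSpace E] [MeasurableSpace E] {μ : Measure E}

theorem DoublingWith.sigmaFinite {C_D : ℝ} (hD : DoublingWith μ C_D) : SigmaFinite μ := by
  rcases isEmpty_or_nonempty E with hE | ⟨⟨x₀⟩⟩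
  · exact ⟨⟨⟨fun _ => univ, fun _ => mem_univ _, fun _ => by simp, iUnion_const _⟩⟩⟩
  · refine ⟨⟨⟨fun n : ℕ => ball x₀ (n + 1), fun _ => mem_univ _,
      fun n => (hD.1 x₀ (n + 1) (by positivity)).2, ?_⟩⟩⟩
    refine eq_univ_of_forall fun y => mem_iUnion.2 ?_
    obtain ⟨n, hn⟩ := exists_nat_gt (dist y x₀)
    exact ⟨n, by rw [mem_ball]; linarith⟩

theorem IsAtom12.integrable {a : ℝ × E → ℝ} (ha : IsAtom12 μ a) : Integrable a (pmeas μ) :=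
  let ⟨_, _, _, _, hint, _⟩ := ha
  hint

theorem IsCWAtom.support_subset_Xset {a : ℝ × E → ℝ} (ha : IsCWAtom μ a) :
    Function.support a ⊆ Xset E :=
  let ⟨_, _, _, _, hsupp, _⟩ := ha
  hsupp.trans inter_subset_right

variable [SFinite μ]

theorem pmeas_pball (c : ℝ × E) {r : ℝ} (hr : 0 < r) :
    pmeas μ (pball c r) = ENNReal.ofReal (2 * r ^ 2) * μ (ball c.2 r) := by
  rw [pball_eq_prod c hr, pmeas, Measure.prod_prod, Real.volume_Ioo]
  ring_nf

theorem pmeas_pball_le_two_mul_inter_Xset {c : ℝ × E} (hc : c ∈ Xset E) {r : ℝ} (hr : 0 < r) :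
    pmeas μ (pball c r) ≤ 2 * pmeas μ (pball c r ∩ Xset E) := by
  have hsub : Ioo c.1 (c.1 + r ^ 2) ×ˢ ball c.2 r ⊆ pball c r ∩ Xset E := by
    rw [pball_eq_prod c hr, Xset_eq_prod, prod_inter_prod, inter_univ]
    exact prod_mono (fun t ht => ⟨⟨by nlinarith [ht.1], ht.2⟩, lt_trans (hc : 0 < c.1) ht.1⟩)
      subset_rfl
  calc pmeas μ (pball c r) = 2 * pmeas μ (Ioo c.1 (c.1 + r ^ 2) ×ˢ ball c.2 r) := by
        rw [pmeas_pball c hr, pmeas, Measure.prod_prod, Real.volume_Ioo, ← mul_assoc,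
          ← ENNReal.ofReal_ofNat 2, ← ENNReal.ofReal_mul zero_le_two]
        ring_nf
    _ ≤ 2 * pmeas μ (pball c r ∩ Xset E) := by gcongr

theorem IsCWAtom.isAtom12_inv_two_smul {a : ℝ × E → ℝ} (ha : IsCWAtom μ a) :
    IsAtom12 μ ((2⁻¹ : ℝ) • a) := by
  obtain ⟨c, r, hr, hc, hsupp, hint, hmean, hnorm⟩ := ha
  have hmean' : ∫ p, a p ∂(pmeas μ) = 0 := by
    rw [← setIntegral_eq_integral_of_forall_compl_eq_zero fun p hp =>
      Function.notMem_support.1 fun h => hp (hsupp h).2, hmean]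
  refine ⟨c, r, hr, (Function.support_const_smul_subset _ _).trans
    (hsupp.trans inter_subset_left), hint.smul _, ?_, eLpNorm_inv_two_smul_le ?_⟩
  · simp only [Pi.smul_apply]
    rw [integral_smul, hmean', smul_zero]
  · refine hnorm.trans (ENNReal.rpow_neg_half_le_mul two_ne_zero ENNReal.ofNat_ne_top ?_)
    calc pmeas μ (pball c r) ≤ 2 * pmeas μ (pball c r ∩ Xset E) :=
          pmeas_pball_le_two_mul_inter_Xset hc hr
      _ ≤ 2 ^ 2 * pmeas μ (pball c r ∩ Xset E) := by gcongr; norm_num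

theorem IsAtom12.isCWAtom_inv_two_smul_foldOntoXset {a : ℝ × E → ℝ} (ha : IsAtom12 μ a) :
    IsCWAtom μ ((2⁻¹ : ℝ) • foldOntoXset a) := by
  obtain ⟨c, r, hr, hsupp, hint, hmean, hnorm⟩ := ha
  set c' : ℝ × E := (max |c.1| (r ^ 2), c.2)
  have hc' : c' ∈ Xset E :=
    show (0 : ℝ) < max |c.1| (r ^ 2) from lt_max_of_lt_right (by positivity)
  have hsupp' : Function.support (foldOntoXset a) ⊆ pball c' r ∩ Xset E := fun p hp =>
    have hp' := support_foldOntoXset_subset a hp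
    ⟨Xset_inter_pball_union_reflect_subset c hr
      ⟨hp'.1, hp'.2.imp (fun h => hsupp h) fun h => hsupp h⟩, hp'.1⟩
  have hvol : pmeas μ (pball c' r ∩ Xset E) ≤ pmeas μ (pball c r) :=
    (measure_mono inter_subset_left).trans (by rw [pmeas_pball c' hr, pmeas_pball c hr])
  refine ⟨c', r, hr, hc', (Function.support_const_smul_subset _ _).trans hsupp',
    hint.foldOntoXset.smul _, ?_, eLpNorm_inv_two_smul_le ?_⟩
  · simp only [Pi.smul_apply]
    rw [integral_smul, setIntegral_foldOntoXset hint, hmean, smul_zero]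
  · calc eLpNorm (foldOntoXset a) 2 (pmeas μ) ≤ 2 * eLpNorm a 2 (pmeas μ) :=
          eLpNorm_foldOntoXset_le hint.aestronglyMeasurable one_le_two
      _ ≤ 2 * pmeas μ (pball c r) ^ (-(1:ℝ)/2) := by gcongr
      _ ≤ 2 * pmeas μ (pball c' r ∩ Xset E) ^ (-(1:ℝ)/2) := by
          refine mul_le_mul' le_rfl ?_
          simpa using ENNReal.rpow_neg_half_le_mul one_ne_zero ENNReal.one_ne_top
            (by simpa using hvol)

end Atoms

section HardyNorms

variable {E : Type*} [MetricSpace E] [MeasurableSpace E] {μ : Measure E} {f : ℝ × E → ℝ}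

def atomicSums (μ : Measure E) (F : ℝ × E → ℝ) : Set ℝ :=
  {c | ∃ (lam : ℕ → ℝ) (a : ℕ → ℝ × E → ℝ), (∀ i, IsAtom12 μ (a i)) ∧
    HasL1Decomp (pmeas μ) F lam a ∧ c = ∑' i, |lam i|}

def cwAtomicSums (μ : Measure E) (f : ℝ × E → ℝ) : Set ℝ :=
  {s | ∃ (lam : ℕ → ℝ) (a : ℕ → ℝ × E → ℝ), (∀ i, IsCWAtom μ (a i)) ∧
    HasL1Decomp ((pmeas μ).restrict (Xset E)) f lam a ∧ s = ∑' i, |lam i|}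

theorem memH1_iff {F : ℝ × E → ℝ} :
    MemH1 μ F ↔ Integrable F (pmeas μ) ∧ (atomicSums μ F).Nonempty :=
  and_congr_right fun _ => ⟨fun ⟨lam, a, ha, h⟩ => ⟨_, lam, a, ha, h, rfl⟩,
    fun ⟨_, lam, a, ha, h, _⟩ => ⟨lam, a, ha, h⟩⟩

theorem memH1CW_iff :
    MemH1CW μ f ↔ IntegrableOn f (Xset E) (pmeas μ) ∧ (cwAtomicSums μ f).Nonempty :=
  and_congr_right fun _ => ⟨fun ⟨lam, a, ha, h⟩ => ⟨_, lam, a, ha, h, rfl⟩,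
    fun ⟨_, lam, a, ha, h, _⟩ => ⟨lam, a, ha, h⟩⟩

theorem H1norm_eq_sInf (F : ℝ × E → ℝ) : H1norm μ F = sInf (atomicSums μ F) := rfl

theorem H1CWnorm_eq_sInf : H1CWnorm μ f = sInf (cwAtomicSums μ f) := by
  simp only [H1CWnorm, cwAtomicSums, HasL1Decomp, and_assoc]

theorem bddBelow_atomicSums {F : ℝ × E → ℝ} : BddBelow (atomicSums μ F) :=
  ⟨0, by rintro _ ⟨lam, a, -, -, rfl⟩; exact tsum_nonneg fun i => abs_nonneg _⟩

theorem bddBelow_cwAtomicSums : BddBelow (cwAtomicSums μ f) :=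
  ⟨0, by rintro _ ⟨lam, a, -, -, rfl⟩; exact tsum_nonneg fun i => abs_nonneg _⟩

theorem tsum_abs_two_mul (lam : ℕ → ℝ) : ∑' i, |2 * lam i| = 2 * ∑' i, |lam i| := by
  simp only [abs_mul, abs_two, tsum_mul_left]

theorem two_mul_mem_cwAtomicSums [SFinite μ] (hf : Integrable ((Xset E).indicator f) (pmeas μ))
    {s : ℝ} (hs : s ∈ atomicSums μ ((Xset E).indicator f)) : 2 * s ∈ cwAtomicSums μ f := by
  obtain ⟨lam, a, ha, hdec, rfl⟩ := hs
  exact ⟨_, _, fun i => (ha i).isCWAtom_inv_two_smul_foldOntoXset,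
    (hdec.restrict_foldOntoXset hf fun i => (ha i).integrable).rescale two_ne_zero,
    (tsum_abs_two_mul lam).symm⟩

theorem two_mul_mem_atomicSums_indicator [SFinite μ] {s : ℝ} (hs : s ∈ cwAtomicSums μ f) :
    2 * s ∈ atomicSums μ ((Xset E).indicator f) := by
  obtain ⟨lam, a, ha, hdec, rfl⟩ := hs
  exact ⟨_, _, fun i => (ha i).isAtom12_inv_two_smul,
    (hdec.indicator_of_restrict measurableSet_Xset fun i => (ha i).support_subset_Xset).rescale
      two_ne_zero, (tsum_abs_two_mul lam).symm⟩

end HardyNorms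

theorem stmt5_general (C_D : ℝ) :
    ∃ c C : ℝ, 0 < c ∧ 0 < C ∧
      ∀ (E : Type) (_ : MetricSpace E) (_ : MeasurableSpace E), BorelSpace E →
        ∀ μ : Measure E, DoublingWith μ C_D →
          ∀ f : ℝ × E → ℝ, IntegrableOn f (Xset E) (pmeas μ) →
            (MemH1CW μ f ↔ MemH1z μ f) ∧
            (MemH1z μ f →
              c * H1znorm μ f ≤ H1CWnorm μ f ∧ H1CWnorm μ f ≤ C * H1znorm μ f) := by
  refine ⟨2⁻¹, 2, by norm_num, two_pos, fun E _ _ _ μ hD f hf => ?_⟩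
  have := hD.sigmaFinite
  have hF : Integrable ((Xset E).indicator f) (pmeas μ) :=
    hf.integrable_indicator measurableSet_Xset
  have hzcw := fun s (hs : s ∈ atomicSums μ _) => two_mul_mem_cwAtomicSums hF hs
  have hcwz := fun s (hs : s ∈ cwAtomicSums μ f) => two_mul_mem_atomicSums_indicator hs
  have hmem : MemH1CW μ f ↔ MemH1z μ f := by
    rw [memH1CW_iff, MemH1z, memH1_iff]
    exact ⟨fun ⟨_, s, hs⟩ => ⟨hf, hF, _, hcwz s hs⟩, fun ⟨_, _, s, hs⟩ => ⟨hf, _, hzcw s hs⟩⟩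
  refine ⟨hmem, fun hz => ?_⟩
  obtain ⟨s, hs⟩ := (memH1_iff.1 hz.2).2
  rw [H1znorm, H1norm_eq_sInf, H1CWnorm_eq_sInf, inv_mul_le_iff₀ two_pos]
  exact ⟨csInf_le_mul_csInf two_pos.le bddBelow_atomicSums ⟨_, hzcw s hs⟩ hcwz,
    csInf_le_mul_csInf two_pos.le bddBelow_cwAtomicSums ⟨s, hs⟩ hzcw⟩

/-- `H¹(X) = H¹_z(X)` as sets of functions, with equivalent norms whose
equivalence constants depend only on the doubling constant `C_D`. -/
theorem stmt5 (C_D : ℝ) (hCD : 1 ≤ C_D) :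
    ∃ c C : ℝ, 0 < c ∧ 0 < C ∧
      ∀ (E : Type) (_ : MetricSpace E) (_ : MeasurableSpace E), BorelSpace E →
        ∀ μ : Measure E, DoublingWith μ C_D →
          ∀ f : ℝ × E → ℝ, IntegrableOn f (Xset E) (pmeas μ) →
            (MemH1CW μ f ↔ MemH1z μ f) ∧
            (MemH1z μ f →
              c * H1znorm μ f ≤ H1CWnorm μ f ∧ H1CWnorm μ f ≤ C * H1znorm μ f) :=
  stmt5_general C_D
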